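/- arXiv:2603.08226 — 3 statements merged into one kernel-verified Lean document; each statement's English description precedes it below -/
import Mathlib

section
/- Let 0 ≤ η < 1. Then ∫₀^η ∫_{−√(2y(1−y))}^{√(2y(1−y))} (1 − x² − y²)^{−3/2} dx dy = 2·√(2η)/√(1−η) − 2·arctan( √(2η)/√(1−η) ). Equivalently, this is the hyperbolic area of the horodisk segment E¹_η = {(x,y) : x² + 2y² − 2y ≤ 0, y ≤ η}. -/
/-!
Both integrals are evaluated by the fundamental theorem of calculus. For `c = 1 - y²` the inner
integrand `(c - x²)^(-3/2)` has primitive `x / (c √(c - x²))`, and at the endpoints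
`x² = 2y(1 - y)` one has `c - x² = (1 - y)²`. The resulting outer integrand is the derivative of
`2 (u - arctan u)` with `u = √(2y) / √(1 - y)`: indeed `(u - arctan u)' = u' u² / (1 + u²)`,
`u² / (1 + u²) = 2y / (1 + y)` and `u' = 1 / (√(2y) (1 - y)^(3/2))`.
-/

open Real Set

lemma Real.rpow_neg_three_halves {t : ℝ} (ht : 0 ≤ t) : t ^ (-(3:ℝ)/2) = (t * √t)⁻¹ := by
  rw [neg_div, rpow_neg ht, show (3:ℝ)/2 = 1 + 1/2 by norm_num, rpow_add' ht (by norm_num),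
    rpow_one, sqrt_eq_rpow]

lemma hasDerivAt_div_mul_sqrt_sub_sq {c x : ℝ} (hx : x ^ 2 < c) :
    HasDerivAt (fun x => x / (c * √(c - x ^ 2))) ((c - x ^ 2) ^ (-(3:ℝ)/2)) x := by
  have hpos : 0 < c - x ^ 2 := sub_pos.2 hx
  have hsqrt : HasDerivAt (fun x => √(c - x ^ 2)) (-(2 * x) / (2 * √(c - x ^ 2))) x := by
    simpa using ((hasDerivAt_pow 2 x).const_sub c).sqrt hpos.ne'
  have hc : 0 < c := (sq_nonneg x).trans_lt hx
  have hs : 0 < √(c - x ^ 2) := sqrt_pos.2 hpos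
  refine ((hasDerivAt_id' x).div (hsqrt.const_mul c) (by positivity)).congr_deriv ?_
  rw [Real.rpow_neg_three_halves hpos.le]
  field_simp
  rw [sq_sqrt hpos.le]
  ring

lemma integral_sub_sq_rpow_neg_three_halves {a c : ℝ} (ha : a ^ 2 < c) :
    ∫ x in -a..a, (c - x ^ 2) ^ (-(3:ℝ)/2) = 2 * a / (c * √(c - a ^ 2)) := by
  have hlt : ∀ x ∈ uIcc (-a) a, x ^ 2 < c := by
    intro x hx
    rcases mem_uIcc.1 hx with h | h <;> nlinarith [h.1, h.2]
  have hcont : ContinuousOn (fun x => (c - x ^ 2) ^ (-(3:ℝ)/2)) (uIcc (-a) a) :=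
    (continuousOn_const.sub (continuousOn_pow 2)).rpow_const
      fun x hx => Or.inl (sub_pos.2 (hlt x hx)).ne'
  rw [intervalIntegral.integral_eq_sub_of_hasDerivAt
    (fun x hx => hasDerivAt_div_mul_sqrt_sub_sq (hlt x hx)) hcont.intervalIntegrable, neg_sq]
  ring

lemma integral_horodisk_slice {y : ℝ} (hy0 : 0 ≤ y) (hy1 : y < 1) :
    ∫ x in -√(2 * y * (1 - y))..√(2 * y * (1 - y)), (1 - x ^ 2 - y ^ 2) ^ (-(3:ℝ)/2) =
      2 * √(2 * y * (1 - y)) / ((1 - y ^ 2) * (1 - y)) := by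
  have hsq : √(2 * y * (1 - y)) ^ 2 = 2 * y * (1 - y) := sq_sqrt (by nlinarith)
  simp_rw [sub_right_comm (1 : ℝ) _ (y ^ 2)]
  rw [integral_sub_sq_rpow_neg_three_halves (by nlinarith), hsq,
    show 1 - y ^ 2 - 2 * y * (1 - y) = (1 - y) ^ 2 by ring, sqrt_sq (by linarith)]

lemma HasDerivAt.sub_arctan {f : ℝ → ℝ} {f' x : ℝ} (hf : HasDerivAt f f' x) :
    HasDerivAt (fun y => f y - Real.arctan (f y)) (f' * f x ^ 2 / (1 + f x ^ 2)) x := by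
  refine (hf.sub hf.arctan).congr_deriv ?_
  field_simp
  ring

lemma hasDerivAt_sqrt_two_mul_div_sqrt_one_sub {y : ℝ} (hy0 : 0 < y) (hy1 : y < 1) :
    HasDerivAt (fun y => √(2 * y) / √(1 - y)) (√(2 * y) * (1 - y) * √(1 - y))⁻¹ y := by
  have h2y : 0 < 2 * y := by linarith
  have h1y : 0 < 1 - y := by linarith
  have hs : HasDerivAt (fun y => √(2 * y)) (2 / (2 * √(2 * y))) y := by
    simpa using ((hasDerivAt_id y).const_mul 2).sqrt h2y.ne'
  have ht : HasDerivAt (fun y => √(1 - y)) (-1 / (2 * √(1 - y))) y := by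
    simpa using ((hasDerivAt_id y).const_sub 1).sqrt h1y.ne'
  have hs0 : 0 < √(2 * y) := sqrt_pos.2 h2y
  have ht0 : 0 < √(1 - y) := sqrt_pos.2 h1y
  refine (hs.div ht ht0.ne').congr_deriv ?_
  field_simp
  rw [sq_sqrt h1y.le, sq_sqrt h2y.le]
  ring

lemma integral_horodisk_slices {η : ℝ} (hη0 : 0 ≤ η) (hη1 : η < 1) :
    ∫ y in (0:ℝ)..η, 2 * √(2 * y * (1 - y)) / ((1 - y ^ 2) * (1 - y)) =
      2 * √(2 * η) / √(1 - η) - 2 * arctan (√(2 * η) / √(1 - η)) := by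
  set u : ℝ → ℝ := fun y => √(2 * y) / √(1 - y) with hu
  have hne : ∀ y ∈ Icc 0 η, √(1 - y) ≠ 0 := fun y hy =>
    (sqrt_pos.2 (by linarith [hy.2])).ne'
  have hucont : ContinuousOn u (Icc 0 η) := by fun_prop (disch := exact hne)
  have hderiv : ∀ y ∈ Ioo 0 η, HasDerivAt (fun y => 2 * (u y - arctan (u y)))
      (2 * √(2 * y * (1 - y)) / ((1 - y ^ 2) * (1 - y))) y := by
    rintro y ⟨hy0, hyη⟩
    have h1y : 0 < 1 - y := by linarith
    refine (((hasDerivAt_sqrt_two_mul_div_sqrt_one_sub hy0 (by linarith)).sub_arctan).const_mul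
      2).congr_deriv ?_
    have hs0 : 0 < √(2 * y) := sqrt_pos.2 (by linarith)
    have ht0 : 0 < √(1 - y) := sqrt_pos.2 h1y
    have h1y2 : 0 < 1 - y ^ 2 := by nlinarith
    rw [sqrt_mul (by linarith : (0:ℝ) ≤ 2 * y) (1 - y)]
    field_simp
    rw [sq_sqrt h1y.le, sq_sqrt (by linarith)]
    ring
  have hint : IntervalIntegrable (fun y => 2 * √(2 * y * (1 - y)) / ((1 - y ^ 2) * (1 - y)))
      MeasureTheory.volume 0 η := by
    refine ContinuousOn.intervalIntegrable ?_
    rw [uIcc_of_le hη0]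
    refine ContinuousOn.div (by fun_prop) (by fun_prop) fun y hy => ?_
    have : 0 < 1 - y := by linarith [hy.2]
    have : 0 < 1 - y ^ 2 := by nlinarith [hy.1]
    positivity
  -- `u` is not differentiable at `0`, hence the version of the FTC with derivatives on `Ioo`.
  rw [intervalIntegral.integral_eq_sub_of_hasDerivAt_of_le hη0
    (continuousOn_const.mul (hucont.sub (continuous_arctan.comp_continuousOn hucont)))
    hderiv hint, hu]
  simp [mul_sub, mul_div_assoc]

theorem area_horodisk_segment (η : ℝ) (hη0 : 0 ≤ η) (hη1 : η < 1) :
    (∫ y in (0:ℝ)..η, ∫ x in (-(Real.sqrt (2 * y * (1 - y))))..(Real.sqrt (2 * y * (1 - y))),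
        (1 - x ^ 2 - y ^ 2) ^ (-(3:ℝ)/2)) =
      2 * Real.sqrt (2 * η) / Real.sqrt (1 - η) -
        2 * Real.arctan (Real.sqrt (2 * η) / Real.sqrt (1 - η)) := by
  rw [← integral_horodisk_slices hη0 hη1]
  refine intervalIntegral.integral_congr fun y hy => ?_
  rw [uIcc_of_le hη0] at hy
  exact integral_horodisk_slice hy.1 (hy.2.trans_lt hη1)
end

section
/- Let 0 < C < 1 and 0 ≤ η < 1. Then ∫₀^η ∫_{−∞}^{−(1/C)√(1−y²)} (x² + y² − 1)^{−3/2} dx dy = ( (1 − √(1−C²)) / √(1−C²) ) · artanh η. (This is the Study–de Sitter area of the region W̃^C_η = {(x,y) : C²x² + y² ≥ 1, 0 ≤ y ≤ η, x ≤ 0}.) -/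
/-! After the reflection `x ↦ -x`, the inner integral is `∫_L^∞ (x² - c)^(-3/2) dx` with
`c = 1 - y²` and `L = √c / C`. The antiderivative `-x / (c √(x² - c))` gives
`(L / √(L² - c) - 1) / c`, and `L / √(L² - c) = 1 / √(1 - C²)`. The remaining integral
`∫₀^η dy / (1 - y²)` is `artanh η`. -/

open MeasureTheory

noncomputable def artanh (x : ℝ) : ℝ := Real.log ((1 + x) / (1 - x)) / 2

open Set Filter Topology

lemma rpow_neg_three_halves_eq_inv_sqrt_pow {u : ℝ} (hu : 0 ≤ u) :
    u ^ (-(3:ℝ)/2) = (Real.sqrt u ^ 3)⁻¹ := by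
  rw [show (-(3:ℝ)/2) = 1/2 * (-3) by norm_num, Real.rpow_mul hu, ← Real.sqrt_eq_rpow,
    Real.rpow_neg (Real.sqrt_nonneg u), show (3:ℝ) = ((3:ℕ):ℝ) by norm_num, Real.rpow_natCast]

lemma hasDerivAt_div_sqrt_sq_sub {c x : ℝ} (hx : c < x ^ 2) :
    HasDerivAt (fun x => x / Real.sqrt (x ^ 2 - c)) (-c * (x ^ 2 - c) ^ (-(3:ℝ)/2)) x := by
  have hu : 0 < x ^ 2 - c := by linarith
  have hr : 0 < Real.sqrt (x ^ 2 - c) := Real.sqrt_pos.2 hu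
  have hsqrt := (((hasDerivAt_pow 2 x).sub_const c).sqrt hu.ne')
  refine ((hasDerivAt_id x).div hsqrt hr.ne').congr_deriv ?_
  rw [rpow_neg_three_halves_eq_inv_sqrt_pow hu.le]
  field_simp
  rw [Real.sq_sqrt hu.le]
  simp only [id]
  ring

lemma tendsto_div_sqrt_sq_sub_atTop (c : ℝ) :
    Tendsto (fun x => x / Real.sqrt (x ^ 2 - c)) atTop (𝓝 1) := by
  have hcont : ContinuousAt (fun t : ℝ => (Real.sqrt (1 - c * t ^ 2))⁻¹) 0 := by
    refine ContinuousAt.inv₀ (by fun_prop) (by simp)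
  refine Tendsto.congr' ?_ (by simpa using hcont.tendsto.comp tendsto_inv_atTop_zero)
  filter_upwards [eventually_gt_atTop 0] with x hx
  have hfactor : x ^ 2 - c = x ^ 2 * (1 - c * x⁻¹ ^ 2) := by
    field_simp
  simp only [Function.comp, hfactor, Real.sqrt_mul (sq_nonneg x), Real.sqrt_sq hx.le]
  field_simp

lemma integral_Ioi_sq_sub_rpow_neg_three_halves {c L : ℝ} (hc : c ≠ 0) (hL : 0 ≤ L)
    (hcL : c < L ^ 2) :
    ∫ x in Ioi L, (x ^ 2 - c) ^ (-(3:ℝ)/2) = (L / Real.sqrt (L ^ 2 - c) - 1) / c := by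
  have hc_lt {x : ℝ} (hx : L ≤ x) : c < x ^ 2 := hcL.trans_le (pow_le_pow_left₀ hL hx 2)
  have hderiv : ∀ x ∈ Ici L, HasDerivAt (fun x => -(x / Real.sqrt (x ^ 2 - c)) / c)
      ((x ^ 2 - c) ^ (-(3:ℝ)/2)) x := fun x hx =>
    ((hasDerivAt_div_sqrt_sq_sub (hc_lt hx)).neg.div_const c).congr_deriv (by field_simp)
  have hnonneg : ∀ x ∈ Ioi L, 0 ≤ (x ^ 2 - c) ^ (-(3:ℝ)/2) := fun x hx =>
    Real.rpow_nonneg (sub_nonneg.2 (hc_lt (le_of_lt hx)).le) _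
  rw [integral_Ioi_of_hasDerivAt_of_nonneg' hderiv hnonneg
    ((tendsto_div_sqrt_sq_sub_atTop c).neg.div_const c)]
  ring

lemma integral_Iic_sds_density {C y : ℝ} (hC0 : 0 < C) (hC1 : C < 1) (hy : y ^ 2 < 1) :
    ∫ x in Iic (-(1 / C) * Real.sqrt (1 - y ^ 2)), (x ^ 2 + y ^ 2 - 1) ^ (-(3:ℝ)/2) =
      (1 - Real.sqrt (1 - C ^ 2)) / Real.sqrt (1 - C ^ 2) * (1 - y ^ 2)⁻¹ := by
  set c := 1 - y ^ 2
  set s := Real.sqrt (1 - C ^ 2)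
  have hc : 0 < c := by linarith
  have hs : 0 < s := Real.sqrt_pos.2 (by nlinarith)
  have hL_sq : (Real.sqrt c / C) ^ 2 - c = (Real.sqrt c * s / C) ^ 2 := by
    rw [div_pow, div_pow, mul_pow, Real.sq_sqrt hc.le, Real.sq_sqrt (by nlinarith)]
    field_simp
  have hcL : c < (Real.sqrt c / C) ^ 2 := by
    have : 0 < (Real.sqrt c * s / C) ^ 2 := by positivity
    linarith
  have hintegrand (x : ℝ) : (-x) ^ 2 + y ^ 2 - 1 = x ^ 2 - c := by ring
  rw [show -(1 / C) * Real.sqrt c = -(Real.sqrt c / C) by ring, ← integral_comp_neg_Ioi]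
  simp only [hintegrand]
  rw [integral_Ioi_sq_sub_rpow_neg_three_halves hc.ne' (by positivity) hcL, hL_sq,
    Real.sqrt_sq (by positivity)]
  field_simp

lemma hasDerivAt_artanh {x : ℝ} (hx : x ∈ Ioo (-1 : ℝ) 1) :
    HasDerivAt artanh (1 - x ^ 2)⁻¹ x := by
  have hp : 0 < 1 + x := by linarith [hx.1]
  have hm : 0 < 1 - x := by linarith [hx.2]
  have hquot := ((hasDerivAt_id x).const_add 1).div ((hasDerivAt_id x).const_sub 1) hm.ne'
  refine ((hquot.log (div_pos hp hm).ne').div_const 2).congr_deriv ?_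
  have hsq : 1 - x ^ 2 ≠ 0 := by nlinarith
  simp only [id, Pi.div_apply]
  field_simp
  ring

lemma integral_inv_one_sub_sq {a b : ℝ} (ha : a ∈ Ioo (-1 : ℝ) 1) (hb : b ∈ Ioo (-1 : ℝ) 1) :
    ∫ y in a..b, (1 - y ^ 2)⁻¹ = artanh b - artanh a := by
  have hsub : uIcc a b ⊆ Ioo (-1 : ℝ) 1 := ordConnected_Ioo.uIcc_subset ha hb
  refine intervalIntegral.integral_eq_sub_of_hasDerivAt
    (fun y hy => hasDerivAt_artanh (hsub hy)) (ContinuousOn.intervalIntegrable ?_)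
  refine ContinuousOn.inv₀ (by fun_prop) fun y hy => ?_
  obtain ⟨h₁, h₂⟩ := hsub hy
  nlinarith

theorem sds_area_W (C η : ℝ) (hC0 : 0 < C) (hC1 : C < 1) (hη0 : 0 ≤ η) (hη1 : η < 1) :
    (∫ y in (0:ℝ)..η, ∫ x in Set.Iic (-(1 / C) * Real.sqrt (1 - y ^ 2)),
        (x ^ 2 + y ^ 2 - 1) ^ (-(3:ℝ)/2)) =
      (1 - Real.sqrt (1 - C ^ 2)) / Real.sqrt (1 - C ^ 2) * artanh η := by
  have hη : η ∈ Ioo (-1 : ℝ) 1 := ⟨by linarith, hη1⟩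
  have hinner : EqOn (fun y => ∫ x in Iic (-(1 / C) * Real.sqrt (1 - y ^ 2)),
        (x ^ 2 + y ^ 2 - 1) ^ (-(3:ℝ)/2))
      (fun y => (1 - Real.sqrt (1 - C ^ 2)) / Real.sqrt (1 - C ^ 2) * (1 - y ^ 2)⁻¹)
      (uIcc 0 η) := fun y hy => by
    obtain ⟨h₁, h₂⟩ := ordConnected_Ioo.uIcc_subset ⟨by norm_num, by norm_num⟩ hη hy
    exact integral_Iic_sds_density hC0 hC1 (by nlinarith)
  rw [intervalIntegral.integral_congr hinner, intervalIntegral.integral_const_mul,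
    integral_inv_one_sub_sq ⟨by norm_num, by norm_num⟩ hη]
  simp [artanh]
end

section
/- Define β̂(C) = ln C − ln 2 + √(1−C²)·artanh √(1−C²) + C for C ∈ (0,1). Then β̂ is strictly increasing on (0,1), lim_{C→0⁺} β̂(C) = 0, and lim_{C→1⁻} β̂(C) = 1 − ln 2. -/
/-!
Write `s = √(1 - C²)`. Since `√(1 - s²) = C`, the identity `artanh s = log ((1 + s) / √(1 - s²))`
gives the closed form `β̂(C) = (1 - s) log C + s log (1 + s) - log 2 + C` on `(0, 1]`. Its derivative
is `1 - (C / s) artanh s`, which is positive because `artanh s < sinh (artanh s) = s / C`.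
Since `1 - s = C² / (1 + s)`, the singular term `(1 - s) log C = C log C · C / (1 + s)` vanishes
as `C → 0⁺`, and the closed form is continuous at `1`.
-/

open Filter

open Set Topology

namespace Real

theorem artanh_eq_log_div_sqrt {x : ℝ} (hx : x ∈ Ioo (-1) 1) :
    Real.artanh x = log ((1 + x) / √(1 - x ^ 2)) := by
  rw [← log_exp (Real.artanh x), ← cosh_add_sinh, cosh_artanh hx, sinh_artanh hx, ← add_div]

theorem artanh_lt_div_sqrt {x : ℝ} (hx : x ∈ Ioo 0 1) : Real.artanh x < x / √(1 - x ^ 2) :=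
  sinh_artanh (Ioo_subset_Ioo_left (by norm_num) hx) ▸ self_lt_sinh_iff.2 (artanh_pos hx)

end Real

theorem artanh_eq_real_artanh {x : ℝ} (hx : x ∈ Icc (-1) 1) : artanh x = Real.artanh x := by
  rw [Real.artanh_eq_half_log hx, artanh]
  ring

theorem hasDerivAt_sqrt_one_sub_sq {x : ℝ} (hx : x ∈ Ioo (-1) 1) :
    HasDerivAt (fun y => √(1 - y ^ 2)) (-x / √(1 - x ^ 2)) x := by
  have hpos : 0 < 1 - x ^ 2 := by nlinarith [hx.1, hx.2]
  convert ((hasDerivAt_pow 2 x).const_sub 1).sqrt hpos.ne' using 1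
  field_simp
  ring

theorem sqrt_one_sub_sq_lt_one {C : ℝ} (hC : 0 < C) : √(1 - C ^ 2) < 1 := by
  rw [Real.sqrt_lt' one_pos]
  nlinarith

theorem sqrt_one_sub_sq_mem_Ioo {C : ℝ} (hC : 0 < C) : √(1 - C ^ 2) ∈ Ioo (-1) 1 :=
  ⟨neg_one_lt_zero.trans_le (Real.sqrt_nonneg _), sqrt_one_sub_sq_lt_one hC⟩

theorem sqrt_one_sub_sq_sqrt_one_sub_sq {C : ℝ} (hC0 : 0 ≤ C) (hC1 : C ≤ 1) :
    √(1 - √(1 - C ^ 2) ^ 2) = C := by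
  rw [Real.sq_sqrt (by nlinarith), sub_sub_cancel, Real.sqrt_sq hC0]

noncomputable def betaHat (C : ℝ) : ℝ :=
  (1 - √(1 - C ^ 2)) * Real.log C + √(1 - C ^ 2) * Real.log (1 + √(1 - C ^ 2)) - Real.log 2 + C

theorem betaHat_eq {C : ℝ} (hC0 : 0 < C) (hC1 : C ≤ 1) :
    Real.log C - Real.log 2 + √(1 - C ^ 2) * artanh √(1 - C ^ 2) + C = betaHat C := by
  have hs := sqrt_one_sub_sq_mem_Ioo hC0
  rw [artanh_eq_real_artanh (Ioo_subset_Icc_self hs), Real.artanh_eq_log_div_sqrt hs,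
    sqrt_one_sub_sq_sqrt_one_sub_sq hC0.le hC1, Real.log_div (by positivity) hC0.ne', betaHat]
  ring

theorem hasDerivAt_betaHat {C : ℝ} (hC : C ∈ Ioo 0 1) :
    HasDerivAt betaHat (1 - C / √(1 - C ^ 2) * Real.artanh √(1 - C ^ 2)) C := by
  have hs := sqrt_one_sub_sq_mem_Ioo hC.1
  have hs' := hasDerivAt_sqrt_one_sub_sq (Ioo_subset_Ioo_left (by norm_num) hC)
  have hs0 : 0 < √(1 - C ^ 2) := Real.sqrt_pos.2 (by nlinarith [hC.1, hC.2])
  have hsq : √(1 - C ^ 2) ^ 2 = 1 - C ^ 2 := Real.sq_sqrt (by nlinarith [hC.1, hC.2])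
  have hC0 : C ≠ 0 := hC.1.ne'
  have := ((((hasDerivAt_const C 1).sub hs').mul (Real.hasDerivAt_log hC0)).add
    (hs'.mul (((hasDerivAt_const C 1).add hs').log (by simp only [Pi.add_apply]; positivity)))).sub_const
    (Real.log 2) |>.add (hasDerivAt_id C)
  refine (this : HasDerivAt betaHat _ C).congr_deriv ?_
  simp only [Pi.add_apply, Pi.sub_apply]
  rw [Real.artanh_eq_log_div_sqrt hs, sqrt_one_sub_sq_sqrt_one_sub_sq hC.1.le hC.2.le,
    Real.log_div (by positivity) hC0]
  field_simp
  linear_combination -√(1 - C ^ 2) * hsq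

theorem betaHat_deriv_pos {C : ℝ} (hC : C ∈ Ioo 0 1) :
    0 < 1 - C / √(1 - C ^ 2) * Real.artanh √(1 - C ^ 2) := by
  obtain ⟨hC0, hC1⟩ := hC
  have hs0 : 0 < √(1 - C ^ 2) := Real.sqrt_pos.2 (by nlinarith)
  have hlt := Real.artanh_lt_div_sqrt ⟨hs0, sqrt_one_sub_sq_lt_one hC0⟩
  rw [sqrt_one_sub_sq_sqrt_one_sub_sq hC0.le hC1.le] at hlt
  have : C / √(1 - C ^ 2) * Real.artanh √(1 - C ^ 2) < 1 :=
    calc C / √(1 - C ^ 2) * Real.artanh √(1 - C ^ 2)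
        < C / √(1 - C ^ 2) * (√(1 - C ^ 2) / C) := by gcongr
      _ = 1 := by field_simp
  linarith

theorem continuousAt_betaHat {C : ℝ} (hC : C ≠ 0) : ContinuousAt betaHat C := by
  unfold betaHat
  fun_prop (disch := first | assumption | positivity)

theorem strictMonoOn_betaHat : StrictMonoOn betaHat (Ioc 0 1) := by
  refine strictMonoOn_of_hasDerivWithinAt_pos (convex_Ioc 0 1)
    (f' := fun C => 1 - C / √(1 - C ^ 2) * Real.artanh √(1 - C ^ 2))
    (fun C hC => (continuousAt_betaHat hC.1.ne').continuousWithinAt) (fun C hC => ?_)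
    (fun C hC => ?_)
  all_goals rw [interior_Ioc] at hC
  · exact (hasDerivAt_betaHat hC).hasDerivWithinAt
  · exact betaHat_deriv_pos hC

theorem tendsto_betaHat_nhdsGT_zero : Tendsto betaHat (𝓝[>] 0) (𝓝 0) := by
  have hcont : Continuous fun C : ℝ => C * Real.log C * (C / (1 + √(1 - C ^ 2))) +
      √(1 - C ^ 2) * Real.log (1 + √(1 - C ^ 2)) - Real.log 2 + C := by
    fun_prop (disch := intro; positivity)
  have h := (hcont.tendsto 0).mono_left (nhdsWithin_le_nhds (s := Ioi 0))
  norm_num at h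
  refine h.congr' (eventuallyEq_of_mem (Ioo_mem_nhdsGT one_pos) fun C hC => ?_)
  have hsq : √(1 - C ^ 2) ^ 2 = 1 - C ^ 2 := Real.sq_sqrt (by nlinarith [hC.1, hC.2])
  have h1s : 1 + √(1 - C ^ 2) ≠ 0 := by positivity
  simp only [betaHat]
  field_simp
  linear_combination Real.log C * hsq

theorem tendsto_betaHat_nhdsLT_one : Tendsto betaHat (𝓝[<] 1) (𝓝 (1 - Real.log 2)) := by
  convert (continuousAt_betaHat one_ne_zero).tendsto.mono_left nhdsWithin_le_nhds using 2
  norm_num [betaHat]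
  ring

theorem betahat_properties (β : ℝ → ℝ)
    (hβ : ∀ C, β C = Real.log C - Real.log 2 +
      Real.sqrt (1 - C ^ 2) * artanh (Real.sqrt (1 - C ^ 2)) + C) :
    StrictMonoOn β (Set.Ioo 0 1) ∧
    Tendsto β (nhdsWithin 0 (Set.Ioi 0)) (nhds 0) ∧
    Tendsto β (nhdsWithin 1 (Set.Iio 1)) (nhds (1 - Real.log 2)) := by
  have hβ' : EqOn betaHat β (Ioc 0 1) := fun C hC => ((hβ C).trans (betaHat_eq hC.1 hC.2)).symm
  exact ⟨(strictMonoOn_betaHat.mono Ioo_subset_Ioc_self).congr (hβ'.mono Ioo_subset_Ioc_self),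
    tendsto_betaHat_nhdsGT_zero.congr' (eventuallyEq_of_mem (Ioc_mem_nhdsGT one_pos) hβ'),
    tendsto_betaHat_nhdsLT_one.congr' (eventuallyEq_of_mem (Ioc_mem_nhdsLT one_pos) hβ')⟩
end
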